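/- arXiv:2304.00945 — 3 statements merged into one kernel-verified Lean document; each statement's English description precedes it below -/
import Mathlib

section
/- Let G be a 3-connected graph and let A, B be the two sides of a non-atomic 3-edge-cut of G (so E(A,B) consists of exactly 3 edges, A∩B = ∅, and |A|,|B| ≥ 2). Then (A,B) is a totally-nested nontrivial tri-separation of G: it is a tri-separation, both G[A] and G[B] contain a cycle, and (A,B) is nested with every tri-separation of G. -/
/-!
Write `B = Aᶜ` and let `X` be either side. As `G` is 3-connected and `|Xᶜ| ≥ 2`, every
nonempty `U ⊊ X` has at least three neighbours outside `U`; as the cut has three edges, two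
disjoint parts of `X` have at most three neighbours across it in total. Hence a mixed separation
`(P, Q)` of `G[X]` whose strict sides are both nonempty has order at least two, and each vertex
of `X` has at most one neighbour across the cut. The first fact makes `G[X]` connected, and the
second, with minimum degree three, leaves it without a leaf, so `G[X]` is not a tree.
If a tri-separation `(C, D)` crossed `(A, B)`, its restrictions `(C ∩ X, D ∩ X)` to both sides
would have order at least two (if a strict side is empty, `C ∩ X` is a single vertex of `C ∩ D`,
whose two neighbours in `C` lie across the cut), yet these orders add up to at most the order of
`(C, D)`, which is three.
-/

namespace Paper

open SimpleGraph

variable {V : Type*} [Fintype V] [DecidableEq V]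

/-- A graph is `k`-connected if it has more than `k` vertices and deleting
fewer than `k` vertices never disconnects it. -/
def KConnected {W : Type*} (k : ℕ) (H : SimpleGraph W) : Prop :=
  k < Nat.card W ∧ ∀ S : Set W, S.ncard < k → (H.induce Sᶜ).Connected

/-- A mixed-separation of `G`: `A ∪ B = V(G)` and both `A \ B` and `B \ A` are nonempty. -/
def MixedSep (G : SimpleGraph V) (A B : Set V) : Prop :=
  A ∪ B = Set.univ ∧ (A \ B).Nonempty ∧ (B \ A).Nonempty

/-- The edges of the separator of `(A,B)`: the edges between `A \ B` and `B \ A`. -/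
def sepEdges (G : SimpleGraph V) (A B : Set V) : Set (Sym2 V) :=
  {e | e ∈ G.edgeSet ∧ ∃ x ∈ A \ B, ∃ y ∈ B \ A, e = s(x, y)}

/-- The separator of `(A,B)`: the vertices of `A ∩ B` together with the
edges between `A \ B` and `B \ A`, viewed as a set in `V ⊕ Sym2 V`. -/
def sepSet (G : SimpleGraph V) (A B : Set V) : Set (V ⊕ Sym2 V) :=
  (Sum.inl '' (A ∩ B)) ∪ (Sum.inr '' sepEdges G A B)

/-- The order of a mixed-separation: the size of its separator. -/
noncomputable def sepOrder (G : SimpleGraph V) (A B : Set V) : ℕ :=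
  (sepSet G A B).ncard

/-- A mixed `k`-separation. -/
def MixedKSep (G : SimpleGraph V) (k : ℕ) (A B : Set V) : Prop :=
  MixedSep G A B ∧ sepOrder G A B = k

/-- A tri-separation: a mixed 3-separation such that every vertex of `A ∩ B`
has at least two neighbours in both `G[A]` and `G[B]`. -/
def TriSep (G : SimpleGraph V) (A B : Set V) : Prop :=
  MixedKSep G 3 A B ∧
    ∀ v ∈ A ∩ B, 2 ≤ (G.neighborSet v ∩ A).ncard ∧ 2 ≤ (G.neighborSet v ∩ B).ncard

/-- Two mixed-separations are nested if, after possibly swapping the names of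
the sides of either one, `A ⊆ C` and `B ⊇ D`. -/
def Nested (A B C D : Set V) : Prop :=
  (A ⊆ C ∧ D ⊆ B) ∨ (A ⊆ D ∧ C ⊆ B) ∨ (B ⊆ C ∧ D ⊆ A) ∨ (B ⊆ D ∧ C ⊆ A)

/-- The induced subgraph `G[A]` contains a cycle. -/
def HasCycleIn (G : SimpleGraph V) (A : Set V) : Prop :=
  ∃ (u : V) (p : G.Walk u u), p.IsCycle ∧ ∀ x ∈ p.support, x ∈ A

/-- A mixed 3-separation is nontrivial if both sides induce a subgraph containing a cycle. -/
def NontrivialSep (G : SimpleGraph V) (A B : Set V) : Prop :=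
  HasCycleIn G A ∧ HasCycleIn G B

/-- A mixed-separation is strong if every vertex in its separator has degree at least 4. -/
def StrongSep (G : SimpleGraph V) (A B : Set V) : Prop :=
  ∀ v ∈ A ∩ B, 4 ≤ (G.neighborSet v).ncard

/-- A tri-separation is totally nested if it is nested with every tri-separation of `G`. -/
def TotallyNested (G : SimpleGraph V) (A B : Set V) : Prop :=
  ∀ C D : Set V, TriSep G C D → Nested A B C D

/-- A trivial tri-separation: its sides are the sides `{v}` and `V \ {v}` of an
atomic cut at a degree-3 vertex `v`. -/
def TrivialSep (G : SimpleGraph V) (A B : Set V) : Prop :=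
  ∃ v : V, (G.neighborSet v).ncard = 3 ∧
    ((A = {v} ∧ B = {v}ᶜ) ∨ (B = {v} ∧ A = {v}ᶜ))

/-- Diagonal edges of the crossing-diagram of `(A,B)` and `(C,D)`:
edges whose endvertices lie in opposite corners. -/
def diagEdges (G : SimpleGraph V) (A B C D : Set V) : Set (Sym2 V) :=
  {e | e ∈ G.edgeSet ∧ ∃ x y, e = s(x, y) ∧
    ((x ∈ (A \ B) ∩ (C \ D) ∧ y ∈ (B \ A) ∩ (D \ C)) ∨
     (x ∈ (A \ B) ∩ (D \ C) ∧ y ∈ (B \ A) ∩ (C \ D)))}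

/-- The centre of the crossing-diagram: `A ∩ B ∩ C ∩ D` together with the diagonal edges. -/
def centre (G : SimpleGraph V) (A B C D : Set V) : Set (V ⊕ Sym2 V) :=
  (Sum.inl '' (A ∩ B ∩ C ∩ D)) ∪ (Sum.inr '' diagEdges G A B C D)

/-- The link for the side `C` in the crossing-diagram of `(A,B)` and `(C,D)`:
the vertices `(A ∩ B) \ D` together with the non-diagonal edges of the separator
of `(A,B)` having an endvertex in a corner for `C`. -/
def link (G : SimpleGraph V) (A B C D : Set V) : Set (V ⊕ Sym2 V) :=
  (Sum.inl '' ((A ∩ B) \ D)) ∪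
    (Sum.inr '' {e | e ∈ sepEdges G A B ∧ e ∉ diagEdges G A B C D ∧ ∃ x ∈ e, x ∈ C \ D})

/-- The corner-separator at the corner for `{A,C}`: the union of the links for `A`
and for `C` together with the centre, minus the diagonal edges without an
endvertex in the corner for `{A,C}`. -/
def cornerSep (G : SimpleGraph V) (A B C D : Set V) : Set (V ⊕ Sym2 V) :=
  link G C D A B ∪ link G A B C D ∪ (Sum.inl '' (A ∩ B ∩ C ∩ D)) ∪
    (Sum.inr '' {e | e ∈ diagEdges G A B C D ∧ ∃ x ∈ e, x ∈ (A \ B) ∩ (C \ D)})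

/-- Jumping edges: edges joining vertices of two opposite links. -/
def jumpEdges (G : SimpleGraph V) (A B C D : Set V) : Set (Sym2 V) :=
  {e | e ∈ G.edgeSet ∧ ∃ x y, e = s(x, y) ∧
    ((x ∈ (A ∩ B) \ D ∧ y ∈ (A ∩ B) \ C) ∨ (x ∈ (C ∩ D) \ B ∧ y ∈ (C ∩ D) \ A))}

/-- A 2-separation: a separation of order two with no edges in its separator. -/
def TwoSep (G : SimpleGraph V) (A B : Set V) : Prop :=
  A ∪ B = Set.univ ∧ (A \ B).Nonempty ∧ (B \ A).Nonempty ∧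
    (A ∩ B).ncard = 2 ∧ sepEdges G A B = ∅

/-- `K` is (the vertex set of) a connected component of `G - S`. -/
def IsCompOf (G : SimpleGraph V) (S K : Set V) : Prop :=
  ∃ c : (G.induce Sᶜ).ConnectedComponent, K = Subtype.val '' c.supp

end Paper

namespace Paper

open SimpleGraph

variable {V : Type*} {G : SimpleGraph V}

def extNeighborSet (G : SimpleGraph V) (U : Set V) : Set V :=
  {v | v ∉ U ∧ ∃ u ∈ U, G.Adj u v}

theorem extNeighborSet_singleton (v : V) : extNeighborSet G {v} = G.neighborSet v := by
  ext w
  simp only [extNeighborSet, Set.mem_singleton_iff, exists_eq_left, Set.mem_ofPred_eq,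
    mem_neighborSet, and_iff_right_iff_imp]
  exact fun h => (G.ne_of_adj h).symm

theorem sepEdges_comm (A B : Set V) : sepEdges G A B = sepEdges G B A := by
  ext e
  constructor <;>
  · rintro ⟨he, x, hx, y, hy, rfl⟩
    exact ⟨he, y, hy, x, hx, Sym2.eq_swap⟩

theorem sepEdges_compl_compl (A : Set V) : sepEdges G Aᶜ Aᶜᶜ = sepEdges G A Aᶜ := by
  rw [compl_compl, sepEdges_comm]

theorem sepEdges_sdiff_sdiff (P Q : Set V) : sepEdges G (P \ Q) (Q \ P) = sepEdges G P Q := by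
  have h₁ : (P \ Q) \ (Q \ P) = P \ Q := sdiff_eq_left.2 disjoint_sdiff_sdiff
  have h₂ : (Q \ P) \ (P \ Q) = Q \ P := sdiff_eq_left.2 disjoint_sdiff_sdiff
  rw [sepEdges, sepEdges, h₁, h₂]

theorem isAcyclic_induce_of_not_hasCycleIn {X : Set V} (h : ¬HasCycleIn G X) :
    (G.induce X).IsAcyclic := by
  intro v p hp
  let f := Embedding.induce (G := G) X
  refine h ⟨v, p.map f.toHom, (Walk.isCycle_map_iff_of_injective f.injective).2 hp,
    fun x hx => ?_⟩
  obtain ⟨a, -, rfl⟩ := List.mem_map.1 ((Walk.support_map _ p) ▸ hx)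
  exact a.2

section Finite

variable [Finite V]

theorem KConnected.three_le_ncard_extNeighborSet (hG : KConnected 3 G) {U : Set V}
    (hU : U.Nonempty) (hUc : 3 ≤ Uᶜ.ncard) : 3 ≤ (extNeighborSet G U).ncard := by
  by_contra! hN
  obtain ⟨w, hwU, hwN⟩ := Set.exists_mem_notMem_of_ncard_lt_ncard (hN.trans_le hUc)
  obtain ⟨u, hu⟩ := hU
  obtain ⟨p⟩ := (hG.2 _ hN).preconnected ⟨u, fun h => h.1 hu⟩ ⟨w, hwN⟩
  obtain ⟨d, -, hd₁, hd₂⟩ := p.exists_boundary_dart {x | x.1 ∈ U} hu hwU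
  exact d.snd.2 ⟨hd₂, d.fst.1, hd₁, d.adj⟩

theorem sepOrder_eq (A B : Set V) :
    sepOrder G A B = (A ∩ B).ncard + (sepEdges G A B).ncard := by
  rw [sepOrder, sepSet, Set.ncard_union_eq, Set.ncard_image_of_injective _ Sum.inl_injective,
    Set.ncard_image_of_injective _ Sum.inr_injective]
  rw [Set.disjoint_left]
  rintro _ ⟨v, -, rfl⟩ ⟨e, -, he⟩
  cases he

theorem sepOrder_comm (A B : Set V) : sepOrder G A B = sepOrder G B A := by
  rw [sepOrder_eq, sepOrder_eq, Set.inter_comm, sepEdges_comm]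

theorem ncard_extNeighborSet_inter_le {P Q : Set V} (h : Disjoint P Q) :
    (extNeighborSet G P ∩ Q).ncard ≤ (sepEdges G P Q).ncard := by
  choose! f hf using fun w (hw : w ∈ extNeighborSet G P ∩ Q) => hw.1.2
  refine Set.ncard_le_ncard_of_injOn (fun w => s(f w, w)) ?_ ?_
  · intro w hw
    obtain ⟨hfP, hadj⟩ := hf w hw
    exact ⟨hadj, f w, ⟨hfP, h.notMem_of_mem_left hfP⟩, w, ⟨hw.2, hw.1.1⟩, rfl⟩
  · intro w hw w' hw' heq
    rcases Sym2.eq_iff.1 heq with ⟨-, rfl⟩ | ⟨-, hw'f⟩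
    · rfl
    · exact absurd (hw'f ▸ (hf w' hw').1) hw.1.1

theorem ncard_extNeighborSet_sdiff_inter_le (P Q : Set V) :
    (extNeighborSet G (P \ Q) ∩ (P ∪ Q)).ncard ≤ sepOrder G P Q := by
  have hsub : extNeighborSet G (P \ Q) ∩ (P ∪ Q) ⊆
      (P ∩ Q) ∪ (extNeighborSet G (P \ Q) ∩ (Q \ P)) := by
    rintro v ⟨hv, hPQ⟩
    by_cases hvP : v ∈ P
    · exact Or.inl ⟨hvP, by_contra fun hvQ => hv.1 ⟨hvP, hvQ⟩⟩
    · exact Or.inr ⟨hv, hPQ.resolve_left hvP, hvP⟩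
  calc _ ≤ (P ∩ Q).ncard + (extNeighborSet G (P \ Q) ∩ (Q \ P)).ncard :=
        (Set.ncard_le_ncard hsub).trans (Set.ncard_union_le _ _)
    _ ≤ (P ∩ Q).ncard + (sepEdges G P Q).ncard := by
        grw [ncard_extNeighborSet_inter_le disjoint_sdiff_sdiff, sepEdges_sdiff_sdiff]
    _ = sepOrder G P Q := (sepOrder_eq P Q).symm

theorem KConnected.three_le_ncard_neighborSet (hG : KConnected 3 G) (v : V) :
    3 ≤ (G.neighborSet v).ncard := by
  rw [← extNeighborSet_singleton]
  refine hG.three_le_ncard_extNeighborSet (Set.singleton_nonempty v) ?_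
  have := Set.ncard_add_ncard_compl {v}
  rw [Set.ncard_singleton] at this
  have := hG.1
  omega

variable {X : Set V}

theorem ncard_extNeighborSet_inter_compl_add_le {U₁ U₂ : Set V} (h₁ : U₁ ⊆ X)
    (h₂ : U₂ ⊆ X) (h : Disjoint U₁ U₂) :
    (extNeighborSet G U₁ ∩ Xᶜ).ncard + (extNeighborSet G U₂ ∩ Xᶜ).ncard ≤
      (sepEdges G X Xᶜ).ncard := by
  have hsub : ∀ {U}, U ⊆ X → sepEdges G U Xᶜ ⊆ sepEdges G X Xᶜ := by
    rintro U hU _ ⟨he, x, hx, y, hy, rfl⟩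
    exact ⟨he, x, ⟨hU hx.1, not_not.2 (hU hx.1)⟩, y, ⟨hy.1, hy.1⟩, rfl⟩
  have hdisj : Disjoint (sepEdges G U₁ Xᶜ) (sepEdges G U₂ Xᶜ) := by
    rw [Set.disjoint_left]
    rintro _ ⟨-, x₁, hx₁, y₁, -, rfl⟩ ⟨-, x₂, hx₂, y₂, hy₂, he⟩
    rcases Sym2.eq_iff.1 he with ⟨rfl, -⟩ | ⟨rfl, -⟩
    · exact h.notMem_of_mem_left hx₁.1 hx₂.1
    · exact hy₂.1 (h₁ hx₁.1)
  calc _ ≤ (sepEdges G U₁ Xᶜ).ncard + (sepEdges G U₂ Xᶜ).ncard := by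
        gcongr <;> apply ncard_extNeighborSet_inter_le <;>
          exact Set.disjoint_compl_right_iff_subset.2 ‹_›
    _ = (sepEdges G U₁ Xᶜ ∪ sepEdges G U₂ Xᶜ).ncard := (Set.ncard_union_eq hdisj).symm
    _ ≤ _ := Set.ncard_le_ncard (Set.union_subset (hsub h₁) (hsub h₂))

theorem three_le_ncard_extNeighborSet_inter_add (hG : KConnected 3 G) (hXc : 2 ≤ Xᶜ.ncard)
    {U : Set V} (hUX : U ⊆ X) (hU : U.Nonempty) (hXU : (X \ U).Nonempty) :
    3 ≤ (extNeighborSet G U ∩ X).ncard + (extNeighborSet G U ∩ Xᶜ).ncard := by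
  obtain ⟨x, hxX, hxU⟩ := hXU
  have hUc : 3 ≤ Uᶜ.ncard := by
    have hins : insert x Xᶜ ⊆ Uᶜ := Set.insert_subset hxU fun v hv hvU => hv (hUX hvU)
    have := Set.ncard_le_ncard hins
    rw [Set.ncard_insert_of_notMem (not_not.2 hxX)] at this
    omega
  rw [← Set.sdiff_eq, Set.ncard_inter_add_ncard_sdiff_eq_ncard]
  exact hG.three_le_ncard_extNeighborSet hU hUc

theorem ncard_neighborSet_inter_compl_le_one (hG : KConnected 3 G)
    (hcut : (sepEdges G X Xᶜ).ncard ≤ 3) (hXc : 2 ≤ Xᶜ.ncard) (hX : 2 ≤ X.ncard)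
    {s : V} (hs : s ∈ X) : (G.neighborSet s ∩ Xᶜ).ncard ≤ 1 := by
  by_contra! h
  have hrest : (X \ {s}).Nonempty :=
    Set.nonempty_of_ncard_ne_zero (by rw [Set.ncard_sdiff_singleton_of_mem hs]; omega)
  have hinner : (extNeighborSet G (X \ {s}) ∩ X).ncard ≤ 1 := by
    refine (Set.ncard_le_ncard fun v hv => ?_).trans (Set.ncard_singleton s).le
    by_contra hvs
    exact hv.1.1 ⟨hv.2, hvs⟩
  have hrest₃ := three_le_ncard_extNeighborSet_inter_add hG hXc Set.sdiff_subset hrest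
    ⟨s, hs, fun h => h.2 rfl⟩
  have hparts := ncard_extNeighborSet_inter_compl_add_le (G := G)
    (Set.singleton_subset_iff.2 hs) (Set.sdiff_subset : X \ {s} ⊆ X) Set.disjoint_sdiff_right
  rw [extNeighborSet_singleton] at hparts
  omega

theorem two_le_sepOrder (hG : KConnected 3 G) (hcut : (sepEdges G X Xᶜ).ncard ≤ 3)
    (hXc : 2 ≤ Xᶜ.ncard) {P Q : Set V} (hPQ : P ∪ Q = X) (hP : (P \ Q).Nonempty)
    (hQ : (Q \ P).Nonempty) : 2 ≤ sepOrder G P Q := by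
  by_contra! h
  have hP₁ := ncard_extNeighborSet_sdiff_inter_le (G := G) P Q
  have hQ₁ := ncard_extNeighborSet_sdiff_inter_le (G := G) Q P
  rw [Set.union_comm, sepOrder_comm] at hQ₁
  rw [hPQ] at hP₁ hQ₁
  have hPX : P \ Q ⊆ X := hPQ ▸ Set.sdiff_subset.trans Set.subset_union_left
  have hQX : Q \ P ⊆ X := hPQ ▸ Set.sdiff_subset.trans Set.subset_union_right
  have hP₃ := three_le_ncard_extNeighborSet_inter_add hG hXc hPX hP
    (hQ.mono fun v hv => ⟨hQX hv, fun h => h.2 hv.1⟩)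
  have hQ₃ := three_le_ncard_extNeighborSet_inter_add hG hXc hQX hQ
    (hP.mono fun v hv => ⟨hPX hv, fun h => h.2 hv.1⟩)
  have hparts := ncard_extNeighborSet_inter_compl_add_le (G := G) hPX hQX disjoint_sdiff_sdiff
  omega

theorem induce_connected_of_cut (hG : KConnected 3 G) (hcut : (sepEdges G X Xᶜ).ncard ≤ 3)
    (hXc : 2 ≤ Xᶜ.ncard) (hX : X.Nonempty) : (G.induce X).Connected := by
  obtain ⟨x, hx⟩ := hX
  rw [connected_iff_exists_forall_reachable]
  refine ⟨⟨x, hx⟩, fun y => ?_⟩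
  by_contra hy
  set P : Set V := Subtype.val '' {v | (G.induce X).Reachable ⟨x, hx⟩ v}
  have hPX : P ⊆ X := by rintro _ ⟨v, -, rfl⟩; exact v.2
  have hsep : sepOrder G P (X \ P) = 0 := by
    rw [sepOrder_eq, Set.inter_sdiff_self, Set.ncard_empty, zero_add, Set.ncard_eq_zero,
      Set.eq_empty_iff_forall_notMem]
    rintro _ ⟨hadj, _, ⟨⟨a, ha, rfl⟩, -⟩, b, ⟨⟨hbX, hbP⟩, -⟩, rfl⟩
    exact hbP ⟨⟨b, hbX⟩, ha.trans (Adj.reachable (by exact hadj)), rfl⟩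
  have hxP : x ∈ P := ⟨⟨x, hx⟩, Reachable.refl _, rfl⟩
  have hyP : y.1 ∉ P := fun ⟨v, hv, hvy⟩ => hy (Subtype.ext hvy ▸ hv)
  have := two_le_sepOrder hG hcut hXc (Set.union_sdiff_cancel hPX)
    ⟨x, hxP, fun h => h.2 hxP⟩ ⟨y, ⟨y.2, hyP⟩, hyP⟩
  omega

theorem hasCycleIn_of_cut (hG : KConnected 3 G) (hcut : (sepEdges G X Xᶜ).ncard ≤ 3)
    (hXc : 2 ≤ Xᶜ.ncard) (hX : 2 ≤ X.ncard) : HasCycleIn G X := by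
  classical
  by_contra hcyc
  have htree : (G.induce X).IsTree :=
    ⟨induce_connected_of_cut hG hcut hXc (Set.nonempty_of_ncard_ne_zero (by omega)),
      isAcyclic_induce_of_not_hasCycleIn hcyc⟩
  have : Nontrivial X := (Set.one_lt_ncard_iff_nontrivial.1 (by omega)).coe_sort
  have : Fintype X := Fintype.ofFinite X
  obtain ⟨u, hu⟩ := htree.exists_vert_degree_one_of_nontrivial
  obtain ⟨w, -, hw⟩ := degree_eq_one_iff_existsUnique_adj.1 hu
  have hinner : (G.neighborSet u ∩ X).ncard ≤ 1 := by
    refine (Set.ncard_le_ncard fun v hv => ?_).trans (Set.ncard_singleton w.1).le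
    exact congrArg Subtype.val (hw ⟨v, hv.2⟩ hv.1)
  have hdeg := hG.three_le_ncard_neighborSet u
  rw [← Set.ncard_inter_add_ncard_sdiff_eq_ncard _ X, Set.sdiff_eq] at hdeg
  have := ncard_neighborSet_inter_compl_le_one hG hcut hXc hX u.2
  omega

theorem two_le_sepOrder_inter_of_inter_subset (hG : KConnected 3 G)
    (hcut : (sepEdges G X Xᶜ).ncard ≤ 3) (hXc : 2 ≤ Xᶜ.ncard) (hX : 2 ≤ X.ncard)
    {C D : Set V} (hdeg : ∀ v ∈ C ∩ D, 2 ≤ (G.neighborSet v ∩ C).ncard)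
    (hC : (C ∩ X).Nonempty) (hCD : C ∩ X ⊆ D) : 2 ≤ sepOrder G (C ∩ X) (D ∩ X) := by
  have hCX : C ∩ X ∩ (D ∩ X) = C ∩ X :=
    Set.inter_eq_left.2 fun v hv => ⟨hCD hv, hv.2⟩
  rw [sepOrder_eq, hCX]
  by_contra! h
  obtain ⟨s, hs⟩ := hC
  have hsingle : ∀ v ∈ C ∩ X, s = v := (Set.ncard_le_one (Set.toFinite _)).1 (by omega) s hs
  have hout : G.neighborSet s ∩ C ⊆ G.neighborSet s ∩ Xᶜ := fun v ⟨hadj, hvC⟩ =>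
    ⟨hadj, fun hvX => G.ne_of_adj hadj (hsingle v ⟨hvC, hvX⟩)⟩
  have := (hdeg s ⟨hs.1, hCD hs⟩).trans (Set.ncard_le_ncard hout)
  have := ncard_neighborSet_inter_compl_le_one hG hcut hXc hX hs.2
  omega

theorem two_le_sepOrder_inter (hG : KConnected 3 G) (hcut : (sepEdges G X Xᶜ).ncard ≤ 3)
    (hXc : 2 ≤ Xᶜ.ncard) (hX : 2 ≤ X.ncard) {C D : Set V} (hCD : C ∪ D = Set.univ)
    (hdeg : ∀ v ∈ C ∩ D,
      2 ≤ (G.neighborSet v ∩ C).ncard ∧ 2 ≤ (G.neighborSet v ∩ D).ncard)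
    (hC : (C ∩ X).Nonempty) (hD : (D ∩ X).Nonempty) : 2 ≤ sepOrder G (C ∩ X) (D ∩ X) := by
  by_cases hCsub : C ∩ X ⊆ D
  · exact two_le_sepOrder_inter_of_inter_subset hG hcut hXc hX (fun v hv => (hdeg v hv).1)
      hC hCsub
  by_cases hDsub : D ∩ X ⊆ C
  · rw [sepOrder_comm]
    exact two_le_sepOrder_inter_of_inter_subset hG hcut hXc hX
      (fun v hv => (hdeg v (Set.inter_comm D C ▸ hv)).2) hD hDsub
  obtain ⟨c, hcCX, hcD⟩ := Set.not_subset.1 hCsub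
  obtain ⟨d, hdDX, hdC⟩ := Set.not_subset.1 hDsub
  refine two_le_sepOrder hG hcut hXc ?_ ⟨c, hcCX, fun h => hcD h.1⟩
    ⟨d, hdDX, fun h => hdC h.1⟩
  rw [← Set.union_inter_distrib_right, hCD, Set.univ_inter]

theorem sepOrder_inter_add_sepOrder_inter_compl_le (C D X : Set V) :
    sepOrder G (C ∩ X) (D ∩ X) + sepOrder G (C ∩ Xᶜ) (D ∩ Xᶜ) ≤ sepOrder G C D := by
  rw [sepOrder, sepOrder, sepOrder, ← Set.ncard_union_eq]
  · refine Set.ncard_le_ncard ?_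
    rintro _ ((⟨v, hv, rfl⟩ | ⟨e, ⟨he, x, hx, y, hy, rfl⟩, rfl⟩) |
      (⟨v, hv, rfl⟩ | ⟨e, ⟨he, x, hx, y, hy, rfl⟩, rfl⟩))
    all_goals first
      | exact Or.inl ⟨v, ⟨hv.1.1, hv.2.1⟩, rfl⟩
      | exact Or.inr ⟨_, ⟨he, x, ⟨hx.1.1, fun h => hx.2 ⟨h, hx.1.2⟩⟩, y,
          ⟨hy.1.1, fun h => hy.2 ⟨h, hy.1.2⟩⟩, rfl⟩, rfl⟩
  · rw [Set.disjoint_left]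
    rintro _ (⟨v, hv, rfl⟩ | ⟨e, ⟨-, x, hx, y, hy, rfl⟩, rfl⟩)
      (⟨w, hw, hwv⟩ | ⟨e', ⟨-, x', hx', y', hy', rfl⟩, he'⟩)
    · exact hw.1.2 (Sum.inl_injective hwv ▸ hv.1.2)
    · cases he'
    · cases hwv
    · rcases Sym2.eq_iff.1 (Sum.inr_injective he') with ⟨h, -⟩ | ⟨-, h⟩
      · exact hx'.1.2 (h ▸ hx.1.2)
      · exact hy'.1.2 (h ▸ hx.1.2)

theorem nested_compl_of_cut (hG : KConnected 3 G) {A : Set V}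
    (hcut : (sepEdges G A Aᶜ).ncard ≤ 3) (hA : 2 ≤ A.ncard) (hAc : 2 ≤ Aᶜ.ncard)
    {C D : Set V} (hT : TriSep G C D) : Nested A Aᶜ C D := by
  obtain ⟨⟨⟨hCD, -, -⟩, hord⟩, hdeg⟩ := hT
  have hDC : D ∪ C = Set.univ := Set.union_comm C D ▸ hCD
  have hcover : ∀ {P Q : Set V}, P ∪ Q = Set.univ → ∀ Y,
      ¬(P ∩ Y).Nonempty → Y ⊆ Q ∧ P ⊆ Yᶜ :=
    fun hPQ Y h => ⟨fun v hv => (Set.eq_univ_iff_forall.1 hPQ v).resolve_left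
      fun hvP => h ⟨v, hvP, hv⟩, fun v hvP hvY => h ⟨v, hvP, hvY⟩⟩
  by_contra hN
  have hCA : (C ∩ A).Nonempty := by_contra fun h => hN (Or.inr (Or.inl (hcover hCD A h)))
  have hDA : (D ∩ A).Nonempty := by_contra fun h => hN (Or.inl (hcover hDC A h))
  have hDAc : (D ∩ Aᶜ).Nonempty := by_contra fun h =>
    hN (Or.inr (Or.inr (Or.inl (by simpa using hcover hDC Aᶜ h))))
  have hCAc : (C ∩ Aᶜ).Nonempty := by_contra fun h =>
    hN (Or.inr (Or.inr (Or.inr (by simpa using hcover hCD Aᶜ h))))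
  have hin := two_le_sepOrder_inter hG hcut hAc hA hCD hdeg hCA hDA
  have hout := two_le_sepOrder_inter hG (by rwa [sepEdges_compl_compl])
    (by rwa [compl_compl]) hAc hCD hdeg hCAc hDAc
  have := sepOrder_inter_add_sepOrder_inter_compl_le (G := G) C D A
  omega

theorem triSep_compl {A : Set V} (hA : A.Nonempty) (hAc : Aᶜ.Nonempty)
    (hcut : (sepEdges G A Aᶜ).ncard = 3) : TriSep G A Aᶜ := by
  refine ⟨⟨⟨Set.union_compl_self A, by simpa using hA,
    by rwa [sdiff_eq_left.2 disjoint_compl_left]⟩, ?_⟩, by simp⟩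
  rw [sepOrder_eq, Set.inter_compl_self, Set.ncard_empty, hcut]

end Finite

end Paper

namespace Paper

variable {V : Type*} [Fintype V] [DecidableEq V]

/-- The sides of a non-atomic 3-edge-cut of a 3-connected graph
form a totally-nested nontrivial tri-separation. -/
theorem stmt10 (G : SimpleGraph V) (h3 : KConnected 3 G) (A B : Set V)
    (hU : A ∪ B = Set.univ) (hdisj : A ∩ B = ∅)
    (hA : 2 ≤ A.ncard) (hB : 2 ≤ B.ncard)
    (hcut : (sepEdges G A B).ncard = 3) :
    TriSep G A B ∧ NontrivialSep G A B ∧ TotallyNested G A B := by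
  obtain rfl : B = Aᶜ :=
    (IsCompl.compl_eq ⟨Set.disjoint_iff_inter_eq_empty.2 hdisj, codisjoint_iff.2 hU⟩).symm
  have hcut' : (sepEdges G Aᶜ Aᶜᶜ).ncard ≤ 3 := by rw [sepEdges_compl_compl, hcut]
  refine ⟨triSep_compl (Set.nonempty_of_ncard_ne_zero (by omega))
      (Set.nonempty_of_ncard_ne_zero (by omega)) hcut,
    ⟨hasCycleIn_of_cut h3 hcut.le hB hA, hasCycleIn_of_cut h3 hcut' (by rwa [compl_compl]) hB⟩,
    fun C D hCD => nested_compl_of_cut h3 hcut.le hA hB hCD⟩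

end Paper
end

section
/- In a 2-connected graph G, for every three vertices u, x, y there exists a 2-fan from u to x and y: a union of a u–x path and a u–y path meeting exactly in u. -/
namespace Paper

open SimpleGraph

variable {V : Type*} [Fintype V] [DecidableEq V]

/-!
Any two vertices `a ≠ b` of a 2-connected graph are joined by two internally disjoint paths
(Whitney), by induction along a walk from `a` to `b`: given such paths `P₁, P₂` from `a` to `b`
and an edge `bc`, a path from `c` to `a` avoiding `b` first meets `P₁ ∪ P₂` at some `z ≠ b`, say
on `P₁`. Following `P₁` from `a` to `z` and then that path back to `c` gives a path meeting `P₂`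
only at `a`, and `P₂` followed by the edge `bc` completes the pair. The same rerouting, applied to
two internally disjoint `u`–`x` paths and a `y`–`u` path avoiding `x`, produces the fan.
-/

section Walks

variable {W : Type*} {G : SimpleGraph W} {a b c : W}

theorem _root_.SimpleGraph.Walk.IsPath.append_of_support_inter {p : G.Walk a b}
    {q : G.Walk b c} (hp : p.IsPath) (hq : q.IsPath)
    (h : ∀ v ∈ p.support, v ∈ q.support → v = b) : (p.append q).IsPath := by
  have hq' := hq.support_nodup
  rw [← q.cons_tail_support, List.nodup_cons] at hq'
  rw [Walk.isPath_def, Walk.support_append]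
  refine hp.support_nodup.append hq'.2 fun v hvp hvq => hq'.1 ?_
  obtain rfl := h v hvp (q.mem_support_iff.mpr (Or.inr hvq))
  exact hvq

theorem _root_.SimpleGraph.Walk.exists_walk_first_mem (p : G.Walk a b) {S : Set W}
    (hb : b ∈ S) :
    ∃ c ∈ S, ∃ q : G.Walk a c, q.support ⊆ p.support ∧ ∀ v ∈ q.support, v ∈ S → v = c := by
  induction p with
  | nil => exact ⟨_, hb, .nil, by simp, by simp⟩
  | @cons a _ _ h p ih =>
    by_cases ha : a ∈ S
    · exact ⟨a, ha, .nil, by simp, by simp⟩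
    obtain ⟨c, hc, q, hqp, hqS⟩ := ih hb
    refine ⟨c, hc, .cons h q, ?_, ?_⟩
    · simpa only [Walk.support_cons] using List.cons_subset_cons a hqp
    · simp only [Walk.support_cons, List.mem_cons, forall_eq_or_imp]
      exact ⟨fun haS => absurd haS ha, hqS⟩

theorem _root_.SimpleGraph.Walk.exists_isPath_first_mem [DecidableEq W] (p : G.Walk a b)
    {S : Set W} (hb : b ∈ S) :
    ∃ c ∈ S, ∃ q : G.Walk a c, q.IsPath ∧ q.support ⊆ p.support ∧
      ∀ v ∈ q.support, v ∈ S → v = c := by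
  obtain ⟨c, hc, q, hqp, hqS⟩ := p.exists_walk_first_mem hb
  exact ⟨c, hc, q.bypass, q.bypass_isPath, fun v hv => hqp (q.support_bypass_subset_support hv),
    fun v hv => hqS v (q.support_bypass_subset_support hv)⟩

end Walks

section Fans

variable {W : Type*} [DecidableEq W] {G : SimpleGraph W} {s t w z : W}

theorem exists_isPath_meets_only_at_start_of_first_mem {P₁ P₂ : G.Walk s t} (hP₁ : P₁.IsPath)
    (hP : ∀ v ∈ P₁.support, v ∈ P₂.support → v = s ∨ v = t)
    {R : G.Walk w z} (hR : R.IsPath) (hz : z ∈ P₁.support) (htR : t ∉ R.support)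
    (hRP : ∀ v ∈ R.support, v ∈ P₁.support ∨ v ∈ P₂.support → v = z) :
    ∃ Q : G.Walk s w, Q.IsPath ∧ ∀ v ∈ Q.support, v ∈ P₂.support → v = s := by
  have hzt : t ≠ z := fun htz => htR (htz ▸ R.end_mem_support)
  have htQ : t ∉ (P₁.takeUntil z hz).support := P₁.endpoint_notMem_support_takeUntil hP₁ hz hzt
  refine ⟨(P₁.takeUntil z hz).append R.reverse,
    (hP₁.takeUntil hz).append_of_support_inter hR.reverse fun v hv hvR => ?_, fun v hvQ hv₂ => ?_⟩
  · exact hRP v (by simpa using hvR) (.inl (P₁.support_takeUntil_subset_support hz hv))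
  rcases Walk.mem_support_append_iff _ _ |>.mp hvQ with hv₁ | hvR
  · exact (hP v (P₁.support_takeUntil_subset_support hz hv₁) hv₂).resolve_right
      fun hvt => htQ (hvt ▸ hv₁)
  · obtain rfl := hRP v (by simpa using hvR) (.inr hv₂)
    exact (hP v hz hv₂).resolve_right hzt.symm

theorem exists_isPath_meets_one_only_at_start {P₁ P₂ : G.Walk s t} (hP₁ : P₁.IsPath)
    (hP₂ : P₂.IsPath)
    (hP : ∀ v ∈ P₁.support, v ∈ P₂.support → v = s ∨ v = t)
    (R : G.Walk w s) (htR : t ∉ R.support) :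
    ∃ Q : G.Walk s w, Q.IsPath ∧
      ((∀ v ∈ Q.support, v ∈ P₁.support → v = s) ∨ ∀ v ∈ Q.support, v ∈ P₂.support → v = s) := by
  obtain ⟨z, hz, R', hR', hR'R, hR'P⟩ :=
    R.exists_isPath_first_mem (S := {v | v ∈ P₁.support ∨ v ∈ P₂.support})
      (.inl P₁.start_mem_support)
  have htR' : t ∉ R'.support := fun ht => htR (hR'R ht)
  rcases hz with hz₁ | hz₂
  · obtain ⟨Q, hQ, hQP⟩ := exists_isPath_meets_only_at_start_of_first_mem hP₁ hP hR' hz₁ htR' hR'P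
    exact ⟨Q, hQ, .inr hQP⟩
  · obtain ⟨Q, hQ, hQP⟩ := exists_isPath_meets_only_at_start_of_first_mem hP₂
      (fun v h₂ h₁ => hP v h₁ h₂) hR' hz₂ htR' fun v hv h => hR'P v hv h.symm
    exact ⟨Q, hQ, .inl hQP⟩

end Fans

section Connectivity

variable {W : Type*} {G : SimpleGraph W} {k : ℕ} {a b : W}

theorem KConnected.exists_walk_avoiding (h : KConnected k G) {S : Set W} (hS : S.ncard < k)
    (ha : a ∉ S) (hb : b ∉ S) : ∃ p : G.Walk a b, ∀ v ∈ p.support, v ∉ S := by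
  obtain ⟨p⟩ := (h.2 S hS).preconnected ⟨a, ha⟩ ⟨b, hb⟩
  refine ⟨p.map (Embedding.induce Sᶜ).toHom, fun v hv => ?_⟩
  obtain ⟨v', -, rfl⟩ := List.mem_map.mp (Walk.support_map _ p ▸ hv)
  exact v'.2

theorem KConnected.exists_walk_avoiding_vertex (h : KConnected 2 G) {c : W} (ha : a ≠ c)
    (hb : b ≠ c) : ∃ p : G.Walk a b, c ∉ p.support := by
  obtain ⟨p, hp⟩ := h.exists_walk_avoiding (S := {c}) (by simp) ha hb
  exact ⟨p, fun hc => hp c hc rfl⟩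

theorem KConnected.exists_internallyDisjoint_paths [DecidableEq W] (h : KConnected 2 G)
    (hab : a ≠ b) : ∃ P Q : G.Walk a b, P.IsPath ∧ Q.IsPath ∧
      ∀ v ∈ P.support, v ∈ Q.support → v = a ∨ v = b := by
  obtain ⟨p, -⟩ :=
    h.exists_walk_avoiding (S := ∅) (by simp) (Set.notMem_empty a) (Set.notMem_empty b)
  revert hab
  induction p using Walk.concatRec with
  | Hnil => exact fun haa => absurd rfl haa
  | @Hconcat a b c p hbc ih =>
    intro hac
    by_cases hab : a = b
    · subst hab
      have hP : (Walk.cons hbc .nil).IsPath := by simpa using hac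
      exact ⟨_, _, hP, hP, fun v hv _ => by simpa using hv⟩
    obtain ⟨P₁, P₂, hP₁, hP₂, hP⟩ := ih hab
    obtain ⟨R, hR⟩ := h.exists_walk_avoiding_vertex hbc.ne.symm hab
    obtain ⟨Q, hQ, hQP⟩ := exists_isPath_meets_one_only_at_start hP₁ hP₂ hP R hR
    have extend : ∀ P : G.Walk a b, P.IsPath → (∀ v ∈ Q.support, v ∈ P.support → v = a) →
        ∃ P Q : G.Walk a c, P.IsPath ∧ Q.IsPath ∧
          ∀ v ∈ P.support, v ∈ Q.support → v = a ∨ v = c := by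
      intro P hP hQP
      have hcP : c ∉ P.support := fun hc => hac (hQP c Q.end_mem_support hc).symm
      refine ⟨P.concat hbc, Q, hP.concat hcP hbc, hQ, fun v hv hvQ => ?_⟩
      rw [Walk.support_concat, List.mem_append, List.mem_singleton] at hv
      exact hv.imp_left (hQP v hvQ)
    exact hQP.elim (extend P₁ hP₁) (extend P₂ hP₂)

end Connectivity

theorem stmt14_general (G : SimpleGraph V) (h2 : KConnected 2 G) (u x y : V)
    (hux : u ≠ x) (hxy : x ≠ y) :
    ∃ (P : G.Walk u x) (Q : G.Walk u y), P.IsPath ∧ Q.IsPath ∧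
      ∀ z : V, z ∈ P.support → z ∈ Q.support → z = u := by
  obtain ⟨P₁, P₂, hP₁, hP₂, hP⟩ := h2.exists_internallyDisjoint_paths hux
  obtain ⟨R, hR⟩ := h2.exists_walk_avoiding_vertex hxy.symm hux
  obtain ⟨Q, hQ, hQP | hQP⟩ := exists_isPath_meets_one_only_at_start hP₁ hP₂ hP R hR
  · exact ⟨P₁, Q, hP₁, hQ, fun z hzP hzQ => hQP z hzQ hzP⟩
  · exact ⟨P₂, Q, hP₂, hQ, fun z hzP hzQ => hQP z hzQ hzP⟩

/-- In a 2-connected graph there is a 2-fan from `u` to `x` and `y`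
for every three (distinct) vertices `u, x, y`. -/
theorem stmt14 (G : SimpleGraph V) (h2 : KConnected 2 G) (u x y : V)
    (hux : u ≠ x) (huy : u ≠ y) (hxy : x ≠ y) :
    ∃ (P : G.Walk u x) (Q : G.Walk u y), P.IsPath ∧ Q.IsPath ∧
      ∀ z : V, z ∈ P.support → z ∈ Q.support → z = u :=
  stmt14_general G h2 u x y hux hxy

end Paper
end

section
/- Two 2-separations (A,B) and (C,D) of a 2-connected graph G cross if and only if one of the following holds: (X1) (A,B) separates the two vertices of C∩D and (C,D) separates the two vertices of A∩B; or (X2) A∩B = C∩D and there are four components H1,…,H4 of G−(A∩B) with H1,H2 ⊆ G[A], H3,H4 ⊆ G[B], H1,H3 ⊆ G[C], H2,H4 ⊆ G[D]. -/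
/-!
Both (X1) and (X2) put vertices into all four corners `A ∩ (C \ D)`, `A ∩ (D \ C)`,
`B ∩ (C \ D)`, `B ∩ (D \ C)`, which rules out nestedness.

Conversely, let the separations cross. If `A ∩ B = C ∩ D`, every component of `G - A ∩ B` lies
in a single corner, and a corner containing none of them would make the separations nested.
Otherwise the key fact is that `G[B] - a` is connected for `a ∈ A ∩ B`, by 2-connectivity. If
`C ∩ D` met `B` only in `a`, this connected set would lie on the side of `(C,D)` containing the
other vertex of `A ∩ B`, and the separations would be nested. So `C ∩ D` meets both `A` and `B`
outside every vertex of `A ∩ B`; this forces `A ∩ B` and `C ∩ D` to be disjoint and `(A,B)` to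
separate the two vertices of `C ∩ D`, and symmetrically.
-/

namespace Paper

open SimpleGraph

variable {V : Type*} [Fintype V] [DecidableEq V]

section

omit [Fintype V] [DecidableEq V]

variable {G : SimpleGraph V} {A B C D S K : Set V} {a b x y : V}

def CrossesLikeCycle (A B C D : Set V) : Prop :=
  ∃ c d : V, c ≠ d ∧ C ∩ D = {c, d} ∧
    ((c ∈ A \ B ∧ d ∈ B \ A) ∨ (c ∈ B \ A ∧ d ∈ A \ B)) ∧
    ∃ a b : V, a ≠ b ∧ A ∩ B = {a, b} ∧
      ((a ∈ C \ D ∧ b ∈ D \ C) ∨ (a ∈ D \ C ∧ b ∈ C \ D))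

def FourFlip (G : SimpleGraph V) (A B C D : Set V) : Prop :=
  A ∩ B = C ∩ D ∧ ∃ H1 H2 H3 H4 : Set V,
    IsCompOf G (A ∩ B) H1 ∧ IsCompOf G (A ∩ B) H2 ∧
    IsCompOf G (A ∩ B) H3 ∧ IsCompOf G (A ∩ B) H4 ∧
    H1 ≠ H2 ∧ H1 ≠ H3 ∧ H1 ≠ H4 ∧ H2 ≠ H3 ∧ H2 ≠ H4 ∧ H3 ≠ H4 ∧
    H1 ⊆ A ∧ H2 ⊆ A ∧ H3 ⊆ B ∧ H4 ⊆ B ∧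
    H1 ⊆ C ∧ H3 ⊆ C ∧ H2 ⊆ D ∧ H4 ⊆ D

theorem exists_eq_pair_of_ncard_eq_two {s : Set V} (hs : s.ncard = 2) (ha : a ∈ s) :
    ∃ b, a ≠ b ∧ s = {a, b} := by
  obtain ⟨x, y, hxy, rfl⟩ := Set.ncard_eq_two.mp hs
  rcases ha with rfl | rfl
  · exact ⟨y, hxy, rfl⟩
  · exact ⟨x, hxy.symm, Set.pair_comm _ _⟩

theorem eq_pair_of_ncard_eq_two {s : Set V} (hs : s.ncard = 2) (ha : a ∈ s) (hb : b ∈ s)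
    (hab : a ≠ b) : s = {a, b} := by
  obtain ⟨b', -, rfl⟩ := exists_eq_pair_of_ncard_eq_two hs ha
  rcases hb with rfl | rfl
  · exact absurd rfl hab
  · rfl

theorem nested_comm_left : Nested B A C D ↔ Nested A B C D := by
  unfold Nested; tauto

theorem nested_comm_right : Nested A B D C ↔ Nested A B C D := by
  unfold Nested; tauto

theorem nested_comm : Nested C D A B ↔ Nested A B C D := by
  unfold Nested; tauto

theorem not_nested_of_corners (hAC : (A ∩ (C \ D)).Nonempty) (hAD : (A ∩ (D \ C)).Nonempty)
    (hBC : (B ∩ (C \ D)).Nonempty) (hBD : (B ∩ (D \ C)).Nonempty) : ¬ Nested A B C D := by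
  obtain ⟨w, hwA, -, hwD⟩ := hAC
  obtain ⟨x, hxA, -, hxC⟩ := hAD
  obtain ⟨y, hyB, -, hyD⟩ := hBC
  obtain ⟨z, hzB, -, hzC⟩ := hBD
  rintro (⟨h, -⟩ | ⟨h, -⟩ | ⟨h, -⟩ | ⟨h, -⟩)
  · exact hxC (h hxA)
  · exact hwD (h hwA)
  · exact hzC (h hzB)
  · exact hyD (h hyB)

theorem exists_walk_of_reachable_induce {s : Set V} {u v : s} (h : (G.induce s).Reachable u v) :
    ∃ p : G.Walk u v, ∀ w ∈ p.support, w ∈ s := by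
  obtain ⟨p⟩ := h
  refine ⟨p.map (Embedding.induce s).toHom, fun w hw => ?_⟩
  obtain ⟨w', -, rfl⟩ := List.mem_map.mp (Walk.support_map _ _ ▸ hw)
  exact w'.2

namespace TwoSep

theorem symm (h : TwoSep G A B) : TwoSep G B A := by
  obtain ⟨hunion, hA, hB, hcard, hedges⟩ := h
  refine ⟨Set.union_comm A B ▸ hunion, hB, hA, Set.inter_comm A B ▸ hcard, ?_⟩
  refine Set.eq_empty_of_forall_notMem fun e ⟨he, x, hx, y, hy, hexy⟩ => ?_
  have : e ∈ sepEdges G A B := ⟨he, y, hy, x, hx, hexy.trans (Sym2.eq_swap)⟩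
  simp [hedges] at this

theorem ncard_inter (h : TwoSep G A B) : (A ∩ B).ncard = 2 :=
  h.2.2.2.1

theorem mem_union (h : TwoSep G A B) (x : V) : x ∈ A ∪ B :=
  h.1 ▸ Set.mem_univ x

theorem mem_of_adj (h : TwoSep G A B) (hx : x ∈ A \ B) (hxy : G.Adj x y) : y ∈ A := by
  by_contra hy
  have : s(x, y) ∈ sepEdges G A B :=
    ⟨hxy, x, hx, y, ⟨(h.mem_union y).resolve_left hy, hy⟩, rfl⟩
  simp [h.2.2.2.2] at this

theorem mem_diff_of_walk (h : TwoSep G A B) (p : G.Walk x y)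
    (hp : ∀ z ∈ p.support, z ∉ A ∩ B) (hx : x ∈ A \ B) : y ∈ A \ B := by
  induction p with
  | nil => exact hx
  | cons hadj p ih =>
    have hA := h.mem_of_adj hx hadj
    refine ih (fun z hz => hp z (by simp [hz])) ⟨hA, fun hB => hp _ (by simp) ⟨hA, hB⟩⟩

theorem exists_walk_to_inter (h : TwoSep G A B) (p : G.Walk x y) (hx : x ∈ B) (hy : y ∈ A) :
    ∃ z ∈ A ∩ B, ∃ q : G.Walk x z, ∀ v ∈ q.support, v ∈ B ∧ v ∈ p.support := by
  induction p with
  | nil => exact ⟨_, ⟨hy, hx⟩, Walk.nil, by simp [hx]⟩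
  | @cons u w _ hadj p ih =>
    by_cases huA : u ∈ A
    · exact ⟨u, ⟨huA, hx⟩, Walk.nil, by simp [hx]⟩
    obtain ⟨z, hz, q, hq⟩ := ih (h.symm.mem_of_adj ⟨hx, huA⟩ hadj) hy
    refine ⟨z, hz, Walk.cons hadj q, ?_⟩
    simp only [Walk.support_cons, List.mem_cons, forall_eq_or_imp]
    exact ⟨⟨hx, by simp⟩, fun v hv => ⟨(hq v hv).1, by simp [(hq v hv).2]⟩⟩

theorem exists_walk_avoiding (h2 : KConnected 2 G) (h : TwoSep G A B) (hS : A ∩ B = {a, b})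
    (hab : a ≠ b) (hx : x ∈ B) (hxa : x ≠ a) :
    ∃ q : G.Walk x b, ∀ v ∈ q.support, v ∈ B ∧ v ≠ a := by
  have hbA : b ∈ A := (hS ▸ Set.mem_insert_of_mem a rfl : b ∈ A ∩ B).1
  obtain ⟨p, hp⟩ := exists_walk_of_reachable_induce <|
    (h2.2 {a} (by simp)).preconnected (⟨x, hxa⟩ : ({a}ᶜ : Set V)) ⟨b, hab.symm⟩
  obtain ⟨z, hz, q, hq⟩ := h.exists_walk_to_inter p hx hbA
  have hza : z ≠ a := hp z (hq z q.end_mem_support).2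
  obtain rfl : z = b := (hS ▸ hz : z ∈ ({a, b} : Set V)).resolve_left hza
  exact ⟨q, fun v hv => ⟨(hq v hv).1, hp v (hq v hv).2⟩⟩

end TwoSep

theorem subset_of_inter_subset_singleton (h2 : KConnected 2 G) (hAB : TwoSep G A B)
    (hCD : TwoSep G C D) (hS : A ∩ B = {a, b}) (hab : a ≠ b) (hbC : b ∈ C \ D)
    (hT : C ∩ D ∩ B ⊆ {a}) : B ⊆ C ∧ D ⊆ A := by
  have hside : ∀ x ∈ B, x ≠ a → x ∈ C \ D := by
    intro x hx hxa
    obtain ⟨q, hq⟩ := hAB.exists_walk_avoiding h2 hS hab hx hxa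
    refine hCD.mem_diff_of_walk q.reverse (fun v hv hvT => ?_) hbC
    obtain ⟨hvB, hva⟩ := hq v (by simpa using hv)
    exact hva (hT ⟨hvT, hvB⟩)
  have hBC : B ⊆ C := by
    intro x hx
    rcases ne_or_eq x a with hxa | rfl
    · exact (hside x hx hxa).1
    by_cases hxT : x ∈ C ∩ D
    · exact hxT.1
    obtain ⟨z, hzB, hzA⟩ := hAB.2.2.1
    have hxA : x ∈ A := (hS ▸ Set.mem_insert x {b} : x ∈ A ∩ B).1
    have hbA : b ∈ A := (hS ▸ Set.mem_insert_of_mem x rfl : b ∈ A ∩ B).1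
    obtain ⟨q, hq⟩ := hAB.exists_walk_avoiding h2 (hS.trans (Set.pair_comm x b)) hab.symm hzB
      (ne_of_mem_of_not_mem hbA hzA).symm
    refine (hCD.mem_diff_of_walk q (fun v hv hvT => ?_)
      (hside z hzB (ne_of_mem_of_not_mem hxA hzA).symm)).1
    obtain rfl : v = x := hT ⟨hvT, (hq v hv).1⟩
    exact hxT hvT
  refine ⟨hBC, fun x hxD => ?_⟩
  by_cases hxB : x ∈ B
  · obtain rfl : x = a := hT ⟨⟨hBC hxB, hxD⟩, hxB⟩
    exact (hS ▸ Set.mem_insert x {b} : x ∈ A ∩ B).1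
  · exact (hAB.mem_union x).resolve_right hxB

theorem nested_of_inter_subset_singleton (h2 : KConnected 2 G) (hAB : TwoSep G A B)
    (hCD : TwoSep G C D) (ha : a ∈ A ∩ B) (hT : C ∩ D ∩ B ⊆ {a}) : Nested A B C D := by
  obtain ⟨b, hab, hS⟩ := exists_eq_pair_of_ncard_eq_two hAB.ncard_inter ha
  have hbT : b ∉ C ∩ D := fun hbT =>
    hab (hT ⟨hbT, (hS ▸ Set.mem_insert_of_mem a rfl : b ∈ A ∩ B).2⟩).symm
  rcases hCD.mem_union b with hbC | hbD
  · exact Or.inr (Or.inr (Or.inl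
      (subset_of_inter_subset_singleton h2 hAB hCD hS hab ⟨hbC, fun hbD => hbT ⟨hbC, hbD⟩⟩ hT)))
  · exact Or.inr (Or.inr (Or.inr (subset_of_inter_subset_singleton h2 hAB hCD.symm hS hab
      ⟨hbD, fun hbC => hbT ⟨hbC, hbD⟩⟩ (Set.inter_comm D C ▸ hT))))

theorem exists_separated_pair (h2 : KConnected 2 G) (hAB : TwoSep G A B) (hCD : TwoSep G C D)
    (hST : A ∩ B ≠ C ∩ D) (hN : ¬ Nested A B C D) :
    ∃ c d, c ≠ d ∧ C ∩ D = {c, d} ∧ c ∈ A \ B ∧ d ∈ B \ A := by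
  have hmeetB : ∀ a ∈ A ∩ B, ∃ t ∈ C ∩ D ∩ B, t ≠ a := fun a ha => by
    by_contra! h
    exact hN (nested_of_inter_subset_singleton h2 hAB hCD ha h)
  have hmeetA : ∀ a ∈ A ∩ B, ∃ t ∈ C ∩ D ∩ A, t ≠ a := fun a ha => by
    by_contra! h
    exact hN (nested_comm_left.mp
      (nested_of_inter_subset_singleton h2 hAB.symm hCD (Set.inter_comm A B ▸ ha) h))
  have hdisj : ∀ x ∈ A ∩ B, x ∉ C ∩ D := by
    intro x hx hxT
    obtain ⟨t, ⟨htT, htB⟩, htx⟩ := hmeetB x hx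
    obtain ⟨t', ⟨ht'T, ht'A⟩, ht'x⟩ := hmeetA x hx
    have hT := eq_pair_of_ncard_eq_two hCD.ncard_inter hxT htT htx.symm
    obtain rfl : t' = t := (hT ▸ ht'T : t' ∈ ({x, t} : Set V)).resolve_left ht'x
    exact hST ((eq_pair_of_ncard_eq_two hAB.ncard_inter hx ⟨ht'A, htB⟩ htx.symm).trans hT.symm)
  obtain ⟨a, ha⟩ := Set.nonempty_of_ncard_ne_zero (hAB.ncard_inter ▸ two_ne_zero)
  obtain ⟨d, ⟨hdT, hdB⟩, -⟩ := hmeetB a ha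
  obtain ⟨c, ⟨hcT, hcA⟩, -⟩ := hmeetA a ha
  have hcB : c ∉ B := fun hcB => hdisj c ⟨hcA, hcB⟩ hcT
  have hcd : c ≠ d := fun h => hcB (h ▸ hdB)
  exact ⟨c, d, hcd, eq_pair_of_ncard_eq_two hCD.ncard_inter hcT hdT hcd, ⟨hcA, hcB⟩,
    ⟨hdB, fun hdA => hdisj d ⟨hdA, hdB⟩ hdT⟩⟩

namespace IsCompOf

theorem nonempty (hK : IsCompOf G S K) : K.Nonempty := by
  obtain ⟨c, rfl⟩ := hK
  obtain ⟨v, hv⟩ := c.exists_rep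
  exact ⟨v, v, hv, rfl⟩

theorem notMem (hK : IsCompOf G S K) (hx : x ∈ K) : x ∉ S := by
  obtain ⟨c, rfl⟩ := hK
  obtain ⟨x', -, rfl⟩ := hx
  exact x'.2

theorem exists_walk (hK : IsCompOf G S K) (hx : x ∈ K) (hy : y ∈ K) :
    ∃ p : G.Walk x y, ∀ z ∈ p.support, z ∉ S := by
  obtain ⟨c, rfl⟩ := hK
  obtain ⟨x', hx', rfl⟩ := hx
  obtain ⟨y', hy', rfl⟩ := hy
  exact exists_walk_of_reachable_induce
    (ConnectedComponent.exact (((c.mem_supp_iff x').mp hx').trans ((c.mem_supp_iff y').mp hy').symm))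

theorem subset_of_mem (hAB : TwoSep G A B) (hS : A ∩ B ⊆ S) (hK : IsCompOf G S K)
    (hx : x ∈ K) (hxA : x ∈ A) : K ⊆ A := by
  intro y hy
  obtain ⟨p, hp⟩ := hK.exists_walk hx hy
  exact (hAB.mem_diff_of_walk p (fun z hz hzS => hp z hz (hS hzS))
    ⟨hxA, fun hxB => hK.notMem hx (hS ⟨hxA, hxB⟩)⟩).1

theorem ne_of_subset {K' : Set V} (hK : IsCompOf G S K) (hS : A ∩ B ⊆ S) (hKA : K ⊆ A)
    (hK'B : K' ⊆ B) : K ≠ K' := by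
  rintro rfl
  obtain ⟨x, hx⟩ := hK.nonempty
  exact hK.notMem hx (hS ⟨hKA hx, hK'B hx⟩)

theorem inter_diff_nonempty {X : Set V} (hK : IsCompOf G S K) (hS : C ∩ D ⊆ S) (hKX : K ⊆ X)
    (hKC : K ⊆ C) : (X ∩ (C \ D)).Nonempty := by
  obtain ⟨x, hx⟩ := hK.nonempty
  exact ⟨x, hKX hx, hKC hx, fun hxD => hK.notMem hx (hS ⟨hKC hx, hxD⟩)⟩

end IsCompOf

theorem exists_isCompOf_mem_of_notMem (hx : x ∉ S) : ∃ K, IsCompOf G S K ∧ x ∈ K :=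
  ⟨_, ⟨(G.induce Sᶜ).connectedComponentMk ⟨x, hx⟩, rfl⟩, ⟨x, hx⟩, rfl, rfl⟩

theorem exists_isCompOf_subset_of_not_nested (hAB : TwoSep G A B) (hCD : TwoSep G C D)
    (hS : A ∩ B = S) (hT : C ∩ D = S) (hN : ¬ Nested A B C D) :
    ∃ K, IsCompOf G S K ∧ K ⊆ A ∧ K ⊆ C := by
  by_contra! hcorner
  have hdiff : ∀ x ∈ A, x ∉ B → x ∈ D \ C := by
    intro x hxA hxB
    have hxS : x ∉ S := hS ▸ fun hx => hxB hx.2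
    obtain ⟨K, hK, hxK⟩ := exists_isCompOf_mem_of_notMem (G := G) hxS
    have hKA := hK.subset_of_mem hAB hS.subset hxK hxA
    have hxC : x ∉ C := fun hxC => hcorner K hK hKA (hK.subset_of_mem hCD hT.subset hxK hxC)
    exact ⟨(hCD.mem_union x).resolve_left hxC, hxC⟩
  refine hN (Or.inr (Or.inl ⟨fun x hxA => ?_, fun x hxC => ?_⟩))
  · by_cases hxB : x ∈ B
    · exact (hT ▸ hS ▸ ⟨hxA, hxB⟩ : x ∈ C ∩ D).2
    · exact (hdiff x hxA hxB).1
  · by_contra hxB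
    exact (hdiff x ((hAB.mem_union x).resolve_right hxB) hxB).2 hxC

theorem not_nested_of_crossesLikeCycle (h : CrossesLikeCycle A B C D) : ¬ Nested A B C D := by
  obtain ⟨-, -, -, -, -, a, b, -, hS, hsep⟩ := h
  have ha : a ∈ A ∩ B := hS ▸ Set.mem_insert a {b}
  have hb : b ∈ A ∩ B := hS ▸ Set.mem_insert_of_mem a rfl
  rcases hsep with ⟨haC, hbD⟩ | ⟨haD, hbC⟩
  · exact not_nested_of_corners ⟨a, ha.1, haC⟩ ⟨b, hb.1, hbD⟩ ⟨a, ha.2, haC⟩ ⟨b, hb.2, hbD⟩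
  · exact not_nested_of_corners ⟨b, hb.1, hbC⟩ ⟨a, ha.1, haD⟩ ⟨b, hb.2, hbC⟩ ⟨a, ha.2, haD⟩

theorem crossesLikeCycle_of_not_nested (h2 : KConnected 2 G) (hAB : TwoSep G A B)
    (hCD : TwoSep G C D) (hST : A ∩ B ≠ C ∩ D) (hN : ¬ Nested A B C D) :
    CrossesLikeCycle A B C D := by
  obtain ⟨c, d, hcd, hT, hc, hd⟩ := exists_separated_pair h2 hAB hCD hST hN
  obtain ⟨a, b, hab, hS, ha, hb⟩ :=
    exists_separated_pair h2 hCD hAB (Ne.symm hST) (mt nested_comm.mp hN)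
  exact ⟨c, d, hcd, hT, Or.inl ⟨hc, hd⟩, a, b, hab, hS, Or.inl ⟨ha, hb⟩⟩

theorem not_nested_of_fourFlip (h : FourFlip G A B C D) : ¬ Nested A B C D := by
  obtain ⟨hST, H1, H2, H3, H4, hc1, hc2, hc3, hc4, -, -, -, -, -, -,
    h1A, h2A, h3B, h4B, h1C, h3C, h2D, h4D⟩ := h
  have hCD : C ∩ D ⊆ A ∩ B := hST.symm.subset
  have hDC : D ∩ C ⊆ A ∩ B := ((Set.inter_comm D C).trans hST.symm).subset
  exact not_nested_of_corners (hc1.inter_diff_nonempty hCD h1A h1C)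
    (hc2.inter_diff_nonempty hDC h2A h2D) (hc3.inter_diff_nonempty hCD h3B h3C)
    (hc4.inter_diff_nonempty hDC h4B h4D)

theorem fourFlip_of_not_nested (hAB : TwoSep G A B) (hCD : TwoSep G C D) (hST : A ∩ B = C ∩ D)
    (hN : ¬ Nested A B C D) : FourFlip G A B C D := by
  have hDC : D ∩ C = A ∩ B := (Set.inter_comm D C).trans hST.symm
  obtain ⟨H1, hc1, h1A, h1C⟩ :=
    exists_isCompOf_subset_of_not_nested hAB hCD rfl hST.symm hN
  obtain ⟨H2, hc2, h2A, h2D⟩ :=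
    exists_isCompOf_subset_of_not_nested hAB hCD.symm rfl hDC (mt nested_comm_right.mp hN)
  obtain ⟨H3, hc3, h3B, h3C⟩ := exists_isCompOf_subset_of_not_nested hAB.symm hCD
    (Set.inter_comm B A) hST.symm (mt nested_comm_left.mp hN)
  obtain ⟨H4, hc4, h4B, h4D⟩ := exists_isCompOf_subset_of_not_nested hAB.symm hCD.symm
    (Set.inter_comm B A) hDC (mt (nested_comm_left.mp ∘ nested_comm_right.mp) hN)
  exact ⟨hST, H1, H2, H3, H4, hc1, hc2, hc3, hc4,
    hc1.ne_of_subset hST.symm.subset h1C h2D, hc1.ne_of_subset subset_rfl h1A h3B,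
    hc1.ne_of_subset subset_rfl h1A h4B, hc2.ne_of_subset subset_rfl h2A h3B,
    hc2.ne_of_subset subset_rfl h2A h4B, hc3.ne_of_subset hST.symm.subset h3C h4D,
    h1A, h2A, h3B, h4B, h1C, h3C, h2D, h4D⟩

end

/-- Two 2-separations of a 2-connected graph cross iff they cross
like in a cycle (X1) or with a four-flip (X2). -/
theorem stmt16 (G : SimpleGraph V) (h2 : KConnected 2 G) (A B C D : Set V)
    (hAB : TwoSep G A B) (hCD : TwoSep G C D) :
    ¬ Nested A B C D ↔
      ((∃ c d : V, c ≠ d ∧ C ∩ D = {c, d} ∧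
          ((c ∈ A \ B ∧ d ∈ B \ A) ∨ (c ∈ B \ A ∧ d ∈ A \ B)) ∧
          ∃ a b : V, a ≠ b ∧ A ∩ B = {a, b} ∧
            ((a ∈ C \ D ∧ b ∈ D \ C) ∨ (a ∈ D \ C ∧ b ∈ C \ D))) ∨
        (A ∩ B = C ∩ D ∧ ∃ H1 H2 H3 H4 : Set V,
          IsCompOf G (A ∩ B) H1 ∧ IsCompOf G (A ∩ B) H2 ∧
          IsCompOf G (A ∩ B) H3 ∧ IsCompOf G (A ∩ B) H4 ∧
          H1 ≠ H2 ∧ H1 ≠ H3 ∧ H1 ≠ H4 ∧ H2 ≠ H3 ∧ H2 ≠ H4 ∧ H3 ≠ H4 ∧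
          H1 ⊆ A ∧ H2 ⊆ A ∧ H3 ⊆ B ∧ H4 ⊆ B ∧
          H1 ⊆ C ∧ H3 ⊆ C ∧ H2 ⊆ D ∧ H4 ⊆ D)) := by
  refine ⟨fun hN => ?_, ?_⟩
  · by_cases hST : A ∩ B = C ∩ D
    · exact Or.inr (fourFlip_of_not_nested hAB hCD hST hN)
    · exact Or.inl (crossesLikeCycle_of_not_nested h2 hAB hCD hST hN)
  · rintro (h | h)
    · exact not_nested_of_crossesLikeCycle h
    · exact not_nested_of_fourFlip h

end Paper
end
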